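/- Let j be a safe client with r_j = r, i.e., d_max(j) ≤ 45·d_av^r(j). Suppose 𝒰 is a family of pairwise disjoint subsets of F, each of volume 1 (y(U) = 1 for U ∈ 𝒰); suppose U_{j,1},…,U_{j,r} are r distinct members of 𝒰 with d_av(j, U_{j,t}) ≤ 2·d_max^t(j) + d_av^t(j) for each t ∈ {1,…,r}; and suppose μ is a probability distribution over subsets S ⊆ F such that Pr[i ∈ S] = y_i for every facility i and |S ∩ U| = 1 almost surely for every U ∈ 𝒰. Then the expected connection cost of j, E_μ[sum of the r smallest values among {d(j,i) : i ∈ S}], is at most 93·r·d_av(j). -/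

import Mathlib

/-!
Fix an outcome `S`. It meets each of the `r` disjoint bundles `U_{j,t}` in exactly one
facility, so it contains `r` distinct facilities whose total distance to `j` bounds the cost of
the `r` nearest ones. Taking expectations, the marginals turn this bound into
`∑ₜ y(U_{j,t}) d_av(j, U_{j,t}) ≤ ∑ₜ (2 d_max^t(j) + d_av^t(j))`. As the quantile function `q_j`
is monotone, `d_max^t(j) ≤ d_av^{t+1}(j)` for `t < r`, whence
`∑ₜ d_max^t(j) ≤ r d_av(j) + d_max(j) ≤ r d_av(j) + 45 d_av^r(j) ≤ 46 r d_av(j)`, and the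
total is at most `(2 · 46 + 1) r d_av(j)`.
-/

open scoped BigOperators

/-- A fractional solution to a fault-tolerant k-median instance: facilities `F`,
clients `C`, requirements `req`, fractional openings `y`, and for each client `j`
a set `Fj j` of the closest `req j` volume of facilities. -/
structure FracSol (X : Type*) [MetricSpace X] where
  F : Finset X
  C : Finset X
  req : X → ℕ
  y : X → ℝ
  Fj : X → Finset X
  req_pos : ∀ j ∈ C, 0 < req j
  y_pos : ∀ i ∈ F, 0 < y i
  y_le_one : ∀ i ∈ F, y i ≤ 1
  Fj_sub : ∀ j ∈ C, Fj j ⊆ F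
  Fj_vol : ∀ j ∈ C, ∑ i ∈ Fj j, y i = (req j : ℝ)
  Fj_closest : ∀ j ∈ C, ∀ i ∈ Fj j, ∀ i' ∈ F, i' ∉ Fj j → dist j i ≤ dist j i'

namespace FracSol

variable {X : Type*} [MetricSpace X]

/-- The quantile (generalized inverse CDF) function `q_j` of the distances from `j`
to the facilities of `F_j`, weighted by `y`: for `x ∈ (s_{l-1}, s_l]` it equals
`d(j, i_l)`, where facilities are sorted by distance to `j`. -/
noncomputable def q (s : FracSol X) (j : X) (x : ℝ) : ℝ :=
  sInf {D : ℝ | x ≤ ∑ i ∈ (s.Fj j).filter (fun i => dist j i ≤ D), s.y i}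

/-- `d_av^t(j) = ∫_{t-1}^{t} q_j(x) dx`. -/
noncomputable def davT (s : FracSol X) (j : X) (t : ℕ) : ℝ :=
  ∫ u in ((t : ℝ) - 1)..(t : ℝ), s.q j u

/-- `d_max^t(j) = q_j(t)`. -/
noncomputable def dmaxT (s : FracSol X) (j : X) (t : ℕ) : ℝ := s.q j (t : ℝ)

/-- `d_av(j) = (1/r_j) ∫_0^{r_j} q_j(x) dx`. -/
noncomputable def dav (s : FracSol X) (j : X) : ℝ :=
  (1 / (s.req j : ℝ)) * ∫ u in (0 : ℝ)..((s.req j : ℝ)), s.q j u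

/-- `d_max(j) = q_j(r_j)`, the maximum distance from `j` to `F_j`. -/
noncomputable def dmax (s : FracSol X) (j : X) : ℝ := s.q j ((s.req j : ℝ))

/-- `Ball(j, L) = {i ∈ F : d(i,j) ≤ L}`. -/
noncomputable def ball (s : FracSol X) (j : X) (L : ℝ) : Finset X :=
  s.F.filter (fun i => dist i j ≤ L)

/-- `B_j = Ball(j, d_max(j)/15)`. -/
noncomputable def Bset (s : FracSol X) (j : X) : Finset X := s.ball j (s.dmax j / 15)

/-- `y(S) = ∑_{i ∈ S} y_i`. -/
noncomputable def vol (s : FracSol X) (S : Finset X) : ℝ := ∑ i ∈ S, s.y i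

/-- A client `j` is dangerous if `d_max(j) ≥ 45 d_av^{r_j}(j)`. -/
def Dangerous (s : FracSol X) (j : X) : Prop :=
  j ∈ s.C ∧ 45 * s.davT j (s.req j) ≤ s.dmax j

/-- Two distinct dangerous clients conflict if they have the same requirement and
`d(j,j') ≤ 6 max{d_av(j), d_av(j')}`. -/
def Conflict (s : FracSol X) (j j' : X) : Prop :=
  j ≠ j' ∧ s.req j = s.req j' ∧ dist j j' ≤ 6 * max (s.dav j) (s.dav j')

/-- `d_av(j, S) = (∑_{i∈S} d(j,i) y_i) / y(S)`. -/
noncomputable def davS (s : FracSol X) (j : X) (S : Finset X) : ℝ :=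
  (∑ i ∈ S, dist j i * s.y i) / s.vol S

/-- Sum of the `r` smallest values among the multiset `{d(j,i) : i ∈ S}`. -/
noncomputable def kSmallestSum (j : X) (S : Finset X) (r : ℕ) : ℝ :=
  (((S.val.map fun i => dist j i).sort (· ≤ ·)).take r).sum

end FracSol

theorem List.Sublist.getElem_le_getElem {α : Type*} [Preorder α] {l l' : List α}
    (h : l'.Sublist l) (hl : l.Pairwise (· ≤ ·)) (i : ℕ) (hi : i < l'.length) :
    l[i]'(hi.trans_le h.length_le) ≤ l'[i] := by
  induction h generalizing i with
  | slnil => simp at hi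
  | cons _ _ ih =>
    rw [List.pairwise_cons] at hl
    cases i with
    | zero => exact (hl.1 _ (List.getElem_mem _)).trans (ih hl.2 0 hi)
    | succ i =>
      exact (List.pairwise_iff_getElem.1 hl.2 i (i + 1) _ _ i.lt_succ_self).trans
        (ih hl.2 (i + 1) hi)
  | cons_cons _ _ ih =>
    cases i with
    | zero => exact le_rfl
    | succ i => exact ih (List.pairwise_cons.1 hl).2 i (by simpa using hi)

theorem List.Sublist.sum_take_le_sum {α : Type*} [AddCommMonoid α] [PartialOrder α]
    [IsOrderedAddMonoid α] {l l' : List α} (h : l'.Sublist l) (hl : l.Pairwise (· ≤ ·)) :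
    (l.take l'.length).sum ≤ l'.sum := by
  refine List.Forall₂.sum_le_sum (List.forall₂_iff_get.2 ⟨by simp [h.length_le], ?_⟩)
  intro i hi _
  simpa using h.getElem_le_getElem hl i (hi.trans_le (List.length_take_le _ _))

theorem Multiset.sum_take_sort_le_sum {α : Type*} [AddCommMonoid α] [LinearOrder α]
    [IsOrderedAddMonoid α] {m m' : Multiset α} (h : m' ≤ m) :
    ((m.sort (· ≤ ·)).take (card m')).sum ≤ m'.sum := by
  have hsub : (m'.sort (· ≤ ·)).Sublist (m.sort (· ≤ ·)) := by
    refine List.sublist_of_subperm_of_pairwise ?_ (Multiset.pairwise_sort _ _)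
      (Multiset.pairwise_sort _ _)
    rwa [← Multiset.coe_le, Multiset.sort_eq, Multiset.sort_eq]
  have hsum : (m'.sort (· ≤ ·)).sum = m'.sum := by
    rw [← Multiset.sum_coe, Multiset.sort_eq]
  simpa [hsum] using hsub.sum_take_le_sum (Multiset.pairwise_sort _ _)

theorem Finset.sum_mul_sum_inter_eq_sum_mul {X R : Type*} [DecidableEq X] [CommSemiring R]
    {F U : Finset X} (hUF : U ⊆ F) {μ : Finset X → R} {y : X → R}
    (hmarg : ∀ i ∈ F, ∑ S ∈ F.powerset.filter (fun S => i ∈ S), μ S = y i) (f : X → R) :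
    ∑ S ∈ F.powerset, μ S * ∑ i ∈ S ∩ U, f i = ∑ i ∈ U, f i * y i := by
  calc ∑ S ∈ F.powerset, μ S * ∑ i ∈ S ∩ U, f i
      = ∑ S ∈ F.powerset, ∑ i ∈ U, if i ∈ S then μ S * f i else 0 := by
        refine Finset.sum_congr rfl fun S _ => ?_
        rw [Finset.inter_comm, ← Finset.filter_mem_eq_inter, Finset.sum_filter, Finset.mul_sum]
        simp only [mul_ite, mul_zero]
    _ = ∑ i ∈ U, ∑ S ∈ F.powerset.filter (fun S => i ∈ S), μ S * f i := by
        rw [Finset.sum_comm]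
        simp only [Finset.sum_filter]
    _ = ∑ i ∈ U, f i * y i :=
        Finset.sum_congr rfl fun i hi => by rw [← Finset.sum_mul, hmarg i (hUF hi), mul_comm]

namespace FracSol

variable {X : Type*} [MetricSpace X]

theorem kSmallestSum_card_le_sum_of_subset {S T : Finset X} (hT : T ⊆ S) (j : X) :
    kSmallestSum j S T.card ≤ ∑ i ∈ T, dist j i := by
  simpa [kSmallestSum] using
    Multiset.sum_take_sort_le_sum (Multiset.map_le_map (f := fun i => dist j i)
      (Finset.val_le_iff.2 hT))

theorem kSmallestSum_le_sum_sum_inter [DecidableEq X] {ι : Type*} {I : Finset ι}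
    {V : ι → Finset X} (hV : (I : Set ι).PairwiseDisjoint V) {S : Finset X}
    (hS : ∀ t ∈ I, (S ∩ V t).card = 1) (j : X) :
    kSmallestSum j S I.card ≤ ∑ t ∈ I, ∑ i ∈ S ∩ V t, dist j i := by
  have hdisj : (I : Set ι).PairwiseDisjoint (fun t => S ∩ V t) :=
    fun t ht t' ht' hne => (hV ht ht' hne).mono Finset.inter_subset_right Finset.inter_subset_right
  have hcard : (I.biUnion fun t => S ∩ V t).card = I.card := by
    rw [Finset.card_biUnion hdisj, Finset.sum_congr rfl hS, Finset.card_eq_sum_ones]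
  rw [← Finset.sum_biUnion hdisj, ← hcard]
  exact kSmallestSum_card_le_sum_of_subset
    (Finset.biUnion_subset.2 fun _ _ => Finset.inter_subset_left) j

variable (s : FracSol X) {j : X}

noncomputable def cdf (j : X) (D : ℝ) : ℝ :=
  ∑ i ∈ (s.Fj j).filter (fun i => dist j i ≤ D), s.y i

theorem q_eq_sInf (x : ℝ) : s.q j x = sInf {D | x ≤ s.cdf j D} := rfl

theorem cdf_nonneg (hj : j ∈ s.C) (D : ℝ) : 0 ≤ s.cdf j D :=
  Finset.sum_nonneg fun i hi => (s.y_pos i (s.Fj_sub j hj (Finset.mem_filter.1 hi).1)).le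

theorem cdf_of_neg {D : ℝ} (hD : D < 0) : s.cdf j D = 0 :=
  Finset.sum_eq_zero fun _ hi => absurd (dist_nonneg.trans (Finset.mem_filter.1 hi).2) hD.not_ge

theorem exists_cdf_eq_req (hj : j ∈ s.C) : ∃ D, s.cdf j D = s.req j := by
  refine ⟨∑ i ∈ s.Fj j, dist j i, ?_⟩
  rw [cdf, Finset.filter_true_of_mem fun i hi =>
    Finset.single_le_sum (f := fun i => dist j i) (fun _ _ => dist_nonneg) hi, s.Fj_vol j hj]

theorem nonneg_of_le_cdf {x D : ℝ} (hx : 0 < x) (hD : x ≤ s.cdf j D) : 0 ≤ D := by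
  by_contra! hneg
  rw [s.cdf_of_neg hneg] at hD
  linarith

theorem q_of_nonpos (hj : j ∈ s.C) {x : ℝ} (hx : x ≤ 0) : s.q j x = 0 := by
  have huniv : {D | x ≤ s.cdf j D} = Set.univ :=
    Set.eq_univ_of_forall fun D => hx.trans (s.cdf_nonneg hj D)
  rw [q_eq_sInf, huniv, Real.sInf_univ]

theorem q_nonneg (hj : j ∈ s.C) (x : ℝ) : 0 ≤ s.q j x := by
  rcases le_or_gt x 0 with hx | hx
  · rw [s.q_of_nonpos hj hx]
  · exact Real.sInf_nonneg fun D hD => s.nonneg_of_le_cdf hx hD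

/-- Beyond `req j` the set defining `q j` is empty, and `q j` drops to `sInf ∅ = 0`. -/
theorem monotoneOn_q (hj : j ∈ s.C) : MonotoneOn (s.q j) (Set.Iic (s.req j : ℝ)) := by
  intro x _ x' hx' hxx'
  rcases le_or_gt x 0 with hx | hx
  · rw [s.q_of_nonpos hj hx]
    exact s.q_nonneg hj x'
  · obtain ⟨D, hD⟩ := s.exists_cdf_eq_req hj
    exact csInf_le_csInf ⟨0, fun D hD => s.nonneg_of_le_cdf hx hD⟩
      ⟨D, show x' ≤ s.cdf j D from hD ▸ hx'⟩ fun D hD => hxx'.trans hD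

theorem intervalIntegrable_q (hj : j ∈ s.C) {a b : ℝ} (ha : a ≤ s.req j) (hb : b ≤ s.req j) :
    IntervalIntegrable (s.q j) MeasureTheory.volume a b :=
  ((s.monotoneOn_q hj).mono fun _ hx => hx.2.trans (max_le ha hb)).intervalIntegrable

theorem davT_nonneg (hj : j ∈ s.C) (t : ℕ) : 0 ≤ s.davT j t :=
  intervalIntegral.integral_nonneg (by linarith) fun u _ => s.q_nonneg hj u

theorem davT_succ (t : ℕ) : s.davT j (t + 1) = ∫ u in (t : ℝ)..(t : ℝ) + 1, s.q j u := by
  simp [davT]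

theorem q_le_davT_succ (hj : j ∈ s.C) {t : ℕ} (ht : t + 1 ≤ s.req j) :
    s.q j t ≤ s.davT j (t + 1) := by
  have ht' : (t : ℝ) + 1 ≤ s.req j := by exact_mod_cast ht
  calc s.q j t = ∫ _ in (t : ℝ)..(t : ℝ) + 1, s.q j t := by simp
    _ ≤ s.davT j (t + 1) := by
      rw [davT_succ]
      refine intervalIntegral.integral_mono_on (by linarith) intervalIntegrable_const
        (s.intervalIntegrable_q hj (by linarith) ht') fun u hu => ?_
      exact s.monotoneOn_q hj (by simp; linarith) (by simp; linarith [hu.2]) hu.1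

theorem integral_q_add_davT_succ (hj : j ∈ s.C) {t : ℕ} (ht : t + 1 ≤ s.req j) :
    (∫ u in (0 : ℝ)..t, s.q j u) + s.davT j (t + 1) = ∫ u in (0 : ℝ)..(t + 1 : ℕ), s.q j u := by
  have ht' : (t : ℝ) + 1 ≤ s.req j := by exact_mod_cast ht
  rw [davT_succ, intervalIntegral.integral_add_adjacent_intervals
    (s.intervalIntegrable_q hj (by simp) (by linarith)) (s.intervalIntegrable_q hj (by linarith) ht')]
  push_cast
  rfl

theorem sum_davT (hj : j ∈ s.C) {r : ℕ} (hr : r ≤ s.req j) :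
    ∑ t ∈ Finset.Icc 1 r, s.davT j t = ∫ u in (0 : ℝ)..r, s.q j u := by
  induction r with
  | zero => simp
  | succ r ih =>
    rw [Finset.sum_Icc_succ_top (by omega), ih (by omega), s.integral_q_add_davT_succ hj hr]

theorem sum_dmaxT_le (hj : j ∈ s.C) {r : ℕ} (hr : r ≤ s.req j) :
    ∑ t ∈ Finset.Icc 1 r, s.dmaxT j t ≤ (∫ u in (0 : ℝ)..r, s.q j u) + s.dmaxT j r := by
  induction r with
  | zero => simp [dmaxT, s.q_of_nonpos hj le_rfl]
  | succ r ih =>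
    rw [Finset.sum_Icc_succ_top (by omega), ← s.integral_q_add_davT_succ hj hr]
    linarith [ih (by omega), s.q_le_davT_succ hj hr, show s.dmaxT j r = s.q j r from rfl]

theorem sum_two_mul_dmaxT_add_davT_le (hj : j ∈ s.C)
    (hsafe : s.dmax j ≤ 45 * s.davT j (s.req j)) :
    ∑ t ∈ Finset.Icc 1 (s.req j), (2 * s.dmaxT j t + s.davT j t) ≤ 93 * s.req j * s.dav j := by
  have hsum := s.sum_davT hj le_rfl
  have hlast : s.davT j (s.req j) ≤ ∑ t ∈ Finset.Icc 1 (s.req j), s.davT j t :=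
    Finset.single_le_sum (fun t _ => s.davT_nonneg hj t)
      (Finset.mem_Icc.2 ⟨s.req_pos j hj, le_rfl⟩)
  have hdav : 93 * (s.req j : ℝ) * s.dav j = 93 * ∫ u in (0 : ℝ)..(s.req j), s.q j u := by
    have : (s.req j : ℝ) ≠ 0 := by exact_mod_cast (s.req_pos j hj).ne'
    rw [dav]
    field_simp
  rw [hdav, Finset.sum_add_distrib, ← Finset.mul_sum, hsum]
  linarith [s.sum_dmaxT_le hj le_rfl, show s.dmaxT j (s.req j) = s.dmax j from rfl]

end FracSol

open FracSol in
theorem expected_cost_safe_client_general {X : Type*} [MetricSpace X] [DecidableEq X]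
    (s : FracSol X) (j : X) (hj : j ∈ s.C) (r : ℕ) (hr : s.req j = r)
    (hsafe : s.dmax j ≤ 45 * s.davT j r)
    (𝒰 : Finset (Finset X)) (h𝒰F : ∀ U ∈ 𝒰, U ⊆ s.F)
    (h𝒰disj : ∀ U ∈ 𝒰, ∀ U' ∈ 𝒰, U ≠ U' → U ∩ U' = ∅)
    (h𝒰vol : ∀ U ∈ 𝒰, s.vol U = 1)
    (U : ℕ → Finset X) (hUmem : ∀ t : ℕ, 1 ≤ t → t ≤ r → U t ∈ 𝒰)
    (hUinj : ∀ t t' : ℕ, 1 ≤ t → t ≤ r → 1 ≤ t' → t' ≤ r → U t = U t' → t = t')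
    (hUclose : ∀ t : ℕ, 1 ≤ t → t ≤ r → s.davS j (U t) ≤ 2 * s.dmaxT j t + s.davT j t)
    (μ : Finset X → ℝ) (hμ0 : ∀ S : Finset X, 0 ≤ μ S)
    (hmarg : ∀ i ∈ s.F, ∑ S ∈ s.F.powerset.filter (fun S => i ∈ S), μ S = s.y i)
    (hbundle : ∀ U' ∈ 𝒰, ∀ S : Finset X, μ S ≠ 0 → (S ∩ U').card = 1) :
    ∑ S ∈ s.F.powerset, μ S * kSmallestSum j S r ≤ 93 * r * s.dav j := by
  subst hr
  have hUmem' : ∀ t ∈ Finset.Icc 1 (s.req j), U t ∈ 𝒰 := fun t ht =>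
    hUmem t (Finset.mem_Icc.1 ht).1 (Finset.mem_Icc.1 ht).2
  have hUdisj : (Finset.Icc 1 (s.req j) : Set ℕ).PairwiseDisjoint U := by
    intro t ht t' ht' hne
    simp only [Finset.coe_Icc, Set.mem_Icc] at ht ht'
    exact Finset.disjoint_iff_inter_eq_empty.2 (h𝒰disj _ (hUmem t ht.1 ht.2) _ (hUmem t' ht'.1 ht'.2)
      fun h => hne (hUinj t t' ht.1 ht.2 ht'.1 ht'.2 h))
  have hcost : ∀ S : Finset X, μ S * kSmallestSum j S (s.req j)
      ≤ μ S * ∑ t ∈ Finset.Icc 1 (s.req j), ∑ i ∈ S ∩ U t, dist j i := by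
    intro S
    rcases eq_or_ne (μ S) 0 with hS | hS
    · simp [hS]
    · refine mul_le_mul_of_nonneg_left ?_ (hμ0 S)
      simpa using kSmallestSum_le_sum_sum_inter hUdisj (fun t ht => hbundle _ (hUmem' t ht) S hS) j
  have hclose : ∀ t ∈ Finset.Icc 1 (s.req j),
      ∑ i ∈ U t, dist j i * s.y i ≤ 2 * s.dmaxT j t + s.davT j t := fun t ht => by
    rw [Finset.mem_Icc] at ht
    simpa [davS, h𝒰vol _ (hUmem t ht.1 ht.2)] using hUclose t ht.1 ht.2
  calc ∑ S ∈ s.F.powerset, μ S * kSmallestSum j S (s.req j)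
      ≤ ∑ S ∈ s.F.powerset, μ S * ∑ t ∈ Finset.Icc 1 (s.req j), ∑ i ∈ S ∩ U t, dist j i :=
        Finset.sum_le_sum fun S _ => hcost S
    _ = ∑ t ∈ Finset.Icc 1 (s.req j), ∑ S ∈ s.F.powerset, μ S * ∑ i ∈ S ∩ U t, dist j i := by
        simp only [Finset.mul_sum]
        exact Finset.sum_comm
    _ = ∑ t ∈ Finset.Icc 1 (s.req j), ∑ i ∈ U t, dist j i * s.y i :=
        Finset.sum_congr rfl fun t ht =>
          Finset.sum_mul_sum_inter_eq_sum_mul (h𝒰F _ (hUmem' t ht)) hmarg _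
    _ ≤ ∑ t ∈ Finset.Icc 1 (s.req j), (2 * s.dmaxT j t + s.davT j t) := Finset.sum_le_sum hclose
    _ ≤ 93 * s.req j * s.dav j := s.sum_two_mul_dmaxT_add_davT_le hj hsafe

open FracSol in
/-- Lemma 6 of the paper: for a safe client `j` (`d_max(j) ≤ 45 d_av^r(j)`), given a family
`𝒰` of disjoint volume-1 bundles, `r` distinct bundles close to `j`, and a distribution `μ`
over subsets of `F` with marginals `y` opening exactly one facility per bundle, the expected
connection cost of `j` is at most `93 r d_av(j)`. -/
theorem expected_cost_safe_client {X : Type*} [MetricSpace X] [DecidableEq X]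
    (s : FracSol X) (j : X) (hj : j ∈ s.C) (r : ℕ) (hr : s.req j = r)
    (hsafe : s.dmax j ≤ 45 * s.davT j r)
    (𝒰 : Finset (Finset X)) (h𝒰F : ∀ U ∈ 𝒰, U ⊆ s.F)
    (h𝒰disj : ∀ U ∈ 𝒰, ∀ U' ∈ 𝒰, U ≠ U' → U ∩ U' = ∅)
    (h𝒰vol : ∀ U ∈ 𝒰, s.vol U = 1)
    (U : ℕ → Finset X) (hUmem : ∀ t : ℕ, 1 ≤ t → t ≤ r → U t ∈ 𝒰)
    (hUinj : ∀ t t' : ℕ, 1 ≤ t → t ≤ r → 1 ≤ t' → t' ≤ r → U t = U t' → t = t')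
    (hUclose : ∀ t : ℕ, 1 ≤ t → t ≤ r → s.davS j (U t) ≤ 2 * s.dmaxT j t + s.davT j t)
    (μ : Finset X → ℝ) (hμ0 : ∀ S : Finset X, 0 ≤ μ S)
    (hμsupp : ∀ S : Finset X, μ S ≠ 0 → S ⊆ s.F)
    (hμ1 : ∑ S ∈ s.F.powerset, μ S = 1)
    (hmarg : ∀ i ∈ s.F, ∑ S ∈ s.F.powerset.filter (fun S => i ∈ S), μ S = s.y i)
    (hbundle : ∀ U' ∈ 𝒰, ∀ S : Finset X, μ S ≠ 0 → (S ∩ U').card = 1) :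
    ∑ S ∈ s.F.powerset, μ S * kSmallestSum j S r ≤ 93 * r * s.dav j :=
  expected_cost_safe_client_general s j hj r hr hsafe 𝒰 h𝒰F h𝒰disj h𝒰vol U hUmem hUinj hUclose μ hμ0
    hmarg hbundle
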